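/- If X is a nonnormal n×n complex matrix, then the positive semidefinite block matrix [[|X*|, X],[X*, |X|]] satisfies ‖[[|X*|, X],[X*, |X|]]‖₂ > ‖ |X*| + |X| ‖₂ in the Frobenius norm. Consequently, the Frobenius-norm inequality ‖[[A,X],[X*,B]]‖₂ ≤ ‖A+B‖₂ for all positive semidefinite completions holds if and only if X is normal. -/

import Mathlib

open scoped Matrix ComplexOrder

noncomputable section

/-- The numerical range of a matrix. -/
def numRange {m : Type*} [Fintype m] (X : Matrix m m ℂ) : Set ℂ :=
  {z | ∃ v : m → ℂ, star v ⬝ᵥ v = 1 ∧ z = star v ⬝ᵥ X.mulVec v}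

/-- The inradius of a subset of the plane: the radius of the largest disc it contains. -/
def inRad (S : Set ℂ) : ℝ := sSup {r : ℝ | ∃ c : ℂ, Metric.closedBall c r ⊆ S}

/-- The indiameter: the diameter of the largest disc contained in the set. -/
def inDiam (S : Set ℂ) : ℝ := 2 * inRad S

/-- The numerical range of the compression of `X` to the subspace `S`. -/
def nrOn {m : Type*} [Fintype m] (X : Matrix m m ℂ) (S : Submodule ℂ (m → ℂ)) : Set ℂ :=
  {z | ∃ v ∈ S, star v ⬝ᵥ v = 1 ∧ z = star v ⬝ᵥ X.mulVec v}

/-- The elliptical width `δ₂(X)`: the supremum of the indiameters of the numerical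
ranges of compressions of `X` to two-dimensional subspaces. -/
def ellWidth {m : Type*} [Fintype m] (X : Matrix m m ℂ) : ℝ :=
  sSup {d | ∃ S : Submodule ℂ (m → ℂ), Module.finrank ℂ S = 2 ∧ d = inDiam (nrOn X S)}

/-- The operator (spectral) norm of a matrix. -/
def opNorm {m : Type*} [Fintype m] [DecidableEq m] (M : Matrix m m ℂ) : ℝ :=
  ‖Matrix.toEuclideanCLM (𝕜 := ℂ) M‖

/-- The Frobenius (Hilbert–Schmidt) norm of a matrix. -/
def frobNorm {m : Type*} [Fintype m] (M : Matrix m m ℂ) : ℝ :=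
  Real.sqrt ((Matrix.trace (Mᴴ * M)).re)

/-- Eigenvalues of a Hermitian matrix in decreasing order (junk value `0` otherwise):
`eigDesc M k` is the `(k+1)`-th largest eigenvalue of `M`. -/
def eigDesc {m : ℕ} (M : Matrix (Fin m) (Fin m) ℂ) (k : Fin m) : ℝ :=
  if h : M.IsHermitian then (h.eigenvalues ∘ Tuple.sort h.eigenvalues) k.rev else 0

/-- The absolute value `|X| = (XᴴX)^(1/2)` of a matrix. -/
def matAbs {m : Type*} [Fintype m] [DecidableEq m] (X : Matrix m m ℂ) : Matrix m m ℂ :=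
  (Matrix.posSemidef_conjTranspose_mul_self X).1.eigenvectorUnitary.1 *
    Matrix.diagonal ((RCLike.ofReal : ℝ → ℂ) ∘ (Real.sqrt ·) ∘
      (Matrix.posSemidef_conjTranspose_mul_self X).1.eigenvalues) *
    (star (Matrix.posSemidef_conjTranspose_mul_self X).1.eigenvectorUnitary : Matrix m m ℂ)

/-- The `2n × 2n` block matrix `[[A, X],[Xᴴ, B]]`, reindexed by `Fin (n+n)`. -/
def blockR {n : ℕ} (A X B : Matrix (Fin n) (Fin n) ℂ) :
    Matrix (Fin (n + n)) (Fin (n + n)) ℂ :=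
  (Matrix.fromBlocks A X Xᴴ B).submatrix finSumFinEquiv.symm finSumFinEquiv.symm

/-- The operator norm distance from `X` to the scalar matrices. -/
def distScalar {m : Type*} [Fintype m] [DecidableEq m] (X : Matrix m m ℂ) : ℝ :=
  ⨅ a : ℂ, opNorm (X - a • 1)

/-- Apply a real function to a Hermitian matrix by the functional calculus
(junk value `0` if the matrix is not Hermitian). -/
def hermApply {m : Type*} [Fintype m] [DecidableEq m] (f : ℝ → ℝ) (M : Matrix m m ℂ) :
    Matrix m m ℂ :=
  if h : M.IsHermitian then h.cfc f else 0

end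

/-!
For a completion `M = [[A, X], [Xᴴ, B]]` one has
`‖M‖₂² - ‖A + B‖₂² = 2 (‖X‖₂² - Re tr (Aᴴ B))`.
For `A = |Xᴴ|`, `B = |X|`, both of Frobenius norm `‖X‖₂`, the parallelogram law gives
`Re tr (|Xᴴ| |X|) < ‖X‖₂²` unless `|Xᴴ| = |X|`, i.e. unless `X` is normal; this completion is
positive since it is `|H| + H = 2 H⁺` for the Hermitian dilation `H = [[0, X], [Xᴴ, 0]]`,
whose modulus is `diag(|Xᴴ|, |X|)`.
Conversely, if `X` is normal and `M = Rᴴ R` with `R = [R₁ R₂]`, then by Schur's inequality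
`‖X‖₂² = ∑ |λᵢ(R₁ᴴ R₂)|² = ∑ |λᵢ(R₂ R₁ᴴ)|² ≤ ‖R₂ R₁ᴴ‖₂² = Re tr (A B)`.
-/

open scoped MatrixOrder
open Matrix Polynomial

lemma Matrix.trace_fromBlocks {m n R : Type*} [Fintype m] [Fintype n] [AddCommMonoid R]
    (A : Matrix m m R) (B : Matrix m n R) (C : Matrix n m R) (D : Matrix n n R) :
    (fromBlocks A B C D).trace = A.trace + D.trace := by
  simp [trace, Fintype.sum_sum_type]

section Frobenius

variable {m n : Type*} [Fintype m] [Fintype n]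

def frobNormSq (M : Matrix m n ℂ) : ℝ := (Mᴴ * M).trace.re

lemma frobNormSq_nonneg (M : Matrix m n ℂ) : 0 ≤ frobNormSq M :=
  Complex.nonneg_iff.mp (posSemidef_conjTranspose_mul_self M).trace_nonneg |>.1

lemma frobNormSq_eq_zero_iff {M : Matrix m n ℂ} : frobNormSq M = 0 ↔ M = 0 := by
  have him : (Mᴴ * M).trace.im = 0 :=
    (Complex.nonneg_iff.mp (posSemidef_conjTranspose_mul_self M).trace_nonneg).2.symm
  rw [← trace_conjTranspose_mul_self_eq_zero_iff, frobNormSq, Complex.ext_iff]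
  simp [him]

lemma frobNormSq_conjTranspose (M : Matrix m n ℂ) : frobNormSq Mᴴ = frobNormSq M := by
  rw [frobNormSq, frobNormSq, conjTranspose_conjTranspose, trace_mul_comm]

lemma re_trace_conjTranspose_mul_comm (A B : Matrix m n ℂ) :
    (Bᴴ * A).trace.re = (Aᴴ * B).trace.re := by
  rw [← conjTranspose_conjTranspose A, ← conjTranspose_mul, trace_conjTranspose,
    conjTranspose_conjTranspose, Complex.star_def, Complex.conj_re]

lemma frobNormSq_add (A B : Matrix m n ℂ) :
    frobNormSq (A + B) = frobNormSq A + frobNormSq B + 2 * (Aᴴ * B).trace.re := by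
  simp only [frobNormSq, conjTranspose_add, Matrix.add_mul, Matrix.mul_add, trace_add,
    Complex.add_re, re_trace_conjTranspose_mul_comm A B]
  ring

lemma frobNormSq_sub (A B : Matrix m n ℂ) :
    frobNormSq (A - B) = frobNormSq A + frobNormSq B - 2 * (Aᴴ * B).trace.re := by
  have h := frobNormSq_add A (-B)
  simp only [frobNormSq, conjTranspose_neg, Matrix.neg_mul, Matrix.mul_neg, neg_neg, trace_neg,
    Complex.neg_re, ← sub_eq_add_neg] at h ⊢
  linarith

lemma two_mul_re_trace_lt_of_ne {A B : Matrix m n ℂ} (h : A ≠ B) :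
    2 * (Aᴴ * B).trace.re < frobNormSq A + frobNormSq B := by
  have hpos : 0 < frobNormSq (A - B) :=
    (frobNormSq_nonneg _).lt_of_ne' (frobNormSq_eq_zero_iff.not.mpr (sub_ne_zero.mpr h))
  linarith [frobNormSq_sub A B]

lemma frobNormSq_fromBlocks {m' n' : Type*} [Fintype m'] [Fintype n'] (A : Matrix m n ℂ)
    (B : Matrix m n' ℂ) (C : Matrix m' n ℂ) (D : Matrix m' n' ℂ) :
    frobNormSq (fromBlocks A B C D) =
      frobNormSq A + frobNormSq B + frobNormSq C + frobNormSq D := by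
  simp only [frobNormSq, fromBlocks_conjTranspose, fromBlocks_multiply, trace_fromBlocks,
    trace_add, Complex.add_re]
  ring

lemma frobNormSq_conjTranspose_mul_mul [DecidableEq m] {U : Matrix m n ℂ} (hU : U * Uᴴ = 1)
    (M : Matrix m m ℂ) :
    frobNormSq (Uᴴ * M * U) = frobNormSq M := by
  have : (Uᴴ * M * U)ᴴ * (Uᴴ * M * U) = Uᴴ * (Mᴴ * M) * U := by
    simp only [conjTranspose_mul, conjTranspose_conjTranspose, Matrix.mul_assoc]
    rw [← Matrix.mul_assoc U, hU, Matrix.one_mul]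
  rw [frobNormSq, frobNormSq, this, trace_mul_cycle, hU, Matrix.one_mul]

end Frobenius

section Normal

variable {m n : Type*} [Fintype m] [Fintype n]

lemma isStarNormal_iff_conjTranspose (M : Matrix n n ℂ) : IsStarNormal M ↔ Mᴴ * M = M * Mᴴ := by
  rw [isStarNormal_iff, commute_iff_eq, star_eq_conjTranspose]

lemma IsStarNormal.conjTranspose_mul_mul [DecidableEq m] {U : Matrix m n ℂ} (hU : U * Uᴴ = 1)
    {M : Matrix m m ℂ} (hM : IsStarNormal M) : IsStarNormal (Uᴴ * M * U) := by
  rw [isStarNormal_iff_conjTranspose] at hM ⊢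
  simp only [conjTranspose_mul, conjTranspose_conjTranspose, Matrix.mul_assoc]
  rw [← Matrix.mul_assoc U Uᴴ, ← Matrix.mul_assoc U Uᴴ, hU, Matrix.one_mul, Matrix.one_mul,
    ← Matrix.mul_assoc Mᴴ, hM, Matrix.mul_assoc]

lemma IsStarNormal.fromBlocks_zero₁₂ {A : Matrix m m ℂ} {C : Matrix n m ℂ} {D : Matrix n n ℂ}
    (h : IsStarNormal (fromBlocks A 0 C D)) : C = 0 ∧ IsStarNormal A := by
  rw [isStarNormal_iff_conjTranspose, fromBlocks_conjTranspose, fromBlocks_multiply,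
    fromBlocks_multiply, fromBlocks_inj] at h
  obtain ⟨h₁₁, -, -, h₂₂⟩ := h
  simp only [conjTranspose_zero, Matrix.mul_zero, add_zero, zero_add] at h₁₁ h₂₂
  have hC : C = 0 := by
    rw [← trace_mul_conjTranspose_self_eq_zero_iff]
    have := congrArg trace h₂₂
    rw [trace_add, trace_mul_comm Dᴴ] at this
    linear_combination -this
  subst hC
  simpa [isStarNormal_iff_conjTranspose] using h₁₁

end Normal

section Eigen

variable {m n : Type*} [Fintype m] [Fintype n] [DecidableEq m] [DecidableEq n]

noncomputable def eigenNormSq (M : Matrix n n ℂ) : ℝ := (M.charpoly.roots.map Complex.normSq).sum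

lemma eigenNormSq_mul_comm (A : Matrix m n ℂ) (B : Matrix n m ℂ) :
    eigenNormSq (A * B) = eigenNormSq (B * A) := by
  have h := congrArg (fun p : ℂ[X] => (p.roots.map Complex.normSq).sum) (charpoly_mul_comm' A B)
  simpa [eigenNormSq, roots_mul, (charpoly_monic _).ne_zero, X_ne_zero, Multiset.map_nsmul,
    Multiset.sum_nsmul] using h

lemma eigenNormSq_conjTranspose_mul_mul {U : Matrix m n ℂ} (hU : U * Uᴴ = 1) (M : Matrix m m ℂ) :
    eigenNormSq (Uᴴ * M * U) = eigenNormSq M := by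
  rw [Matrix.mul_assoc, eigenNormSq_mul_comm, Matrix.mul_assoc, hU, Matrix.mul_one]

lemma eigenNormSq_fromBlocks_zero₁₂ (A : Matrix m m ℂ) (C : Matrix n m ℂ) (D : Matrix n n ℂ) :
    eigenNormSq (fromBlocks A 0 C D) = eigenNormSq A + eigenNormSq D := by
  simp [eigenNormSq, charpoly_fromBlocks_zero₁₂,
    roots_mul (mul_ne_zero (charpoly_monic A).ne_zero (charpoly_monic D).ne_zero)]

lemma eigenNormSq_eq_frobNormSq_of_unique [Unique n] (D : Matrix n n ℂ) :
    eigenNormSq D = frobNormSq D := by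
  have : D.charpoly = X - C (D default default) := by
    simp [charpoly, det_unique]
  simp [eigenNormSq, frobNormSq, this, trace, mul_apply, Complex.normSq_apply]

lemma eigenNormSq_of_isEmpty [IsEmpty n] (D : Matrix n n ℂ) : eigenNormSq D = 0 := by
  simp [eigenNormSq, charpoly_isEmpty]

end Eigen

lemma exists_conjTranspose_mul_mul_eq_fromBlocks_zero₁₂ {ι κ : Type*} [Fintype ι] [DecidableEq ι]
    [Fintype κ] [DecidableEq κ] (hcard : Fintype.card ι = Fintype.card κ + 1) (M : Matrix ι ι ℂ) :
    ∃ U : Matrix ι (κ ⊕ Unit) ℂ, U * Uᴴ = 1 ∧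
      ∃ A C D, Uᴴ * M * U = fromBlocks A 0 C D := by
  have : Nonempty ι := Fintype.card_pos_iff.mp (by omega)
  obtain ⟨μ, hμ⟩ := Module.End.exists_eigenvalue (toLin' M)
  obtain ⟨v, hv, hv0⟩ := hμ.exists_hasEigenvector
  rw [Module.End.mem_eigenspace_iff, toLin'_apply] at hv
  set u : EuclideanSpace ℂ ι := (‖WithLp.toLp 2 v‖⁻¹ : ℂ) • WithLp.toLp 2 v
  have hu : ‖u‖ = 1 := by simp [u, norm_smul, hv0]
  have hMu : M *ᵥ u = μ • u := by simp [u, mulVec_smul, hv, smul_comm μ]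
  obtain ⟨b, hb⟩ := Orthonormal.exists_orthonormalBasis_extension_of_card_eq (𝕜 := ℂ)
    (v := fun _ : κ ⊕ Unit => u) (s := {Sum.inr ()}) (by simp [hcard])
    (by constructor <;> simp [hu])
  -- the columns of `U` are the vectors of `b`, the last one being the unit eigenvector `u`
  set U := (EuclideanSpace.basisFun ι ℂ).toBasis.toMatrix b
  have hMU : ∀ i, (M * U) i (Sum.inr ()) = μ * U i (Sum.inr ()) := fun i => by
    simpa [U, Module.Basis.toMatrix_apply, hb, mul_apply, mulVec, dotProduct] using congrFun hMu i
  have hU₁ : Uᴴ * U = 1 := by simp [U]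
  have h₁₂ : (Uᴴ * M * U).toBlocks₁₂ = 0 := by
    ext k ⟨⟩
    simp only [toBlocks₁₂, of_apply, Matrix.mul_assoc, mul_apply (M := Uᴴ) (N := M * U), hMU]
    simp_rw [mul_left_comm _ μ, ← Finset.mul_sum, ← mul_apply, hU₁]
    simp
  exact ⟨U, by simp [U], _, _, _, by rw [← h₁₂, fromBlocks_toBlocks]⟩

/-- Schur's inequality and its equality case, by unitary triangularization one eigenvector at a
time. -/
theorem eigenNormSq_le_frobNormSq_and_eq_of_isStarNormal {n : Type*} [Fintype n] [DecidableEq n]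
    (M : Matrix n n ℂ) :
    eigenNormSq M ≤ frobNormSq M ∧ (IsStarNormal M → eigenNormSq M = frobNormSq M) := by
  induction hk : Fintype.card n generalizing n with
  | zero =>
    have := Fintype.card_eq_zero_iff.mp hk
    simp [eigenNormSq_of_isEmpty, frobNormSq, trace]
  | succ k ih =>
    obtain ⟨U, hU, A, C, D, hM⟩ :=
      exists_conjTranspose_mul_mul_eq_fromBlocks_zero₁₂ (κ := ULift (Fin k)) (by simpa using hk) M
    obtain ⟨ih_le, ih_eq⟩ := ih A (by simp)
    have heig : eigenNormSq M = eigenNormSq A + frobNormSq D := by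
      rw [← eigenNormSq_conjTranspose_mul_mul hU, hM, eigenNormSq_fromBlocks_zero₁₂,
        eigenNormSq_eq_frobNormSq_of_unique D]
    have hfrob : frobNormSq M = frobNormSq A + frobNormSq C + frobNormSq D := by
      rw [← frobNormSq_conjTranspose_mul_mul hU, hM, frobNormSq_fromBlocks,
        frobNormSq_eq_zero_iff.mpr rfl, add_zero]
    refine ⟨by linarith [frobNormSq_nonneg C], fun hMn => ?_⟩
    obtain ⟨rfl, hA⟩ := (hM ▸ hMn.conjTranspose_mul_mul hU).fromBlocks_zero₁₂
    rw [heig, hfrob, ih_eq hA, frobNormSq_eq_zero_iff.mpr rfl, add_zero]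

section Modulus

variable {m n : Type*} [Fintype m] [Fintype n] [DecidableEq m] [DecidableEq n]

lemma matAbs_eq_cfcAbs (X : Matrix m m ℂ) : matAbs X = CFC.abs X := by
  rw [CFC.abs, CFC.sqrt_eq_real_sqrt _ (star_mul_self_nonneg X), cfcₙ_eq_cfc,
    star_eq_conjTranspose, (posSemidef_conjTranspose_mul_self X).1.cfc_eq, IsHermitian.cfc,
    Unitary.conjStarAlgAut_apply]
  rfl

lemma frobNormSq_cfcAbs (X : Matrix m m ℂ) : frobNormSq (CFC.abs X) = frobNormSq X := by
  rw [frobNormSq, frobNormSq, ← star_eq_conjTranspose, (CFC.abs_nonneg X).isSelfAdjoint.star_eq,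
    CFC.abs_mul_abs, star_eq_conjTranspose]

lemma fromBlocks_zero_zero_nonneg {P : Matrix m m ℂ} {Q : Matrix n n ℂ} (hP : 0 ≤ P)
    (hQ : 0 ≤ Q) : 0 ≤ fromBlocks P 0 0 Q := by
  obtain ⟨p, rfl⟩ := CStarAlgebra.nonneg_iff_eq_star_mul_self.mp hP
  obtain ⟨q, rfl⟩ := CStarAlgebra.nonneg_iff_eq_star_mul_self.mp hQ
  convert star_mul_self_nonneg (fromBlocks p 0 0 q) using 1
  simp [star_eq_conjTranspose, fromBlocks_conjTranspose, fromBlocks_multiply]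

theorem posSemidef_fromBlocks_cfcAbs (X : Matrix m m ℂ) :
    (fromBlocks (CFC.abs Xᴴ) X Xᴴ (CFC.abs X)).PosSemidef := by
  set H : Matrix (m ⊕ m) (m ⊕ m) ℂ := fromBlocks 0 X Xᴴ 0
  have hH : IsSelfAdjoint H := by
    simp [IsSelfAdjoint, H, star_eq_conjTranspose, fromBlocks_conjTranspose]
  have habs : CFC.abs H = fromBlocks (CFC.abs Xᴴ) 0 0 (CFC.abs X) := by
    rw [CFC.abs, CFC.sqrt_eq_iff _ _ (star_mul_self_nonneg H)
      (fromBlocks_zero_zero_nonneg (CFC.abs_nonneg _) (CFC.abs_nonneg _))]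
    simp [H, fromBlocks_multiply, CFC.abs_mul_abs, star_eq_conjTranspose, fromBlocks_conjTranspose]
  have hsum : fromBlocks (CFC.abs Xᴴ) X Xᴴ (CFC.abs X) = CFC.abs H + H := by
    simp [habs, H, fromBlocks_add]
  rw [hsum, ← nonneg_iff_posSemidef, CFC.abs_add_self H hH]
  exact smul_nonneg zero_le_two (CFC.posPart_nonneg H)

lemma re_trace_cfcAbs_mul_cfcAbs_lt {X : Matrix m m ℂ} (hX : ¬ IsStarNormal X) :
    ((CFC.abs Xᴴ)ᴴ * CFC.abs X).trace.re < frobNormSq X := by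
  have hne : CFC.abs Xᴴ ≠ CFC.abs X := fun h => hX <| by
    rw [isStarNormal_iff_conjTranspose]
    simpa [CFC.abs_mul_abs, star_eq_conjTranspose] using congrArg (fun P => P * P) h.symm
  have := two_mul_re_trace_lt_of_ne hne
  rw [frobNormSq_cfcAbs, frobNormSq_cfcAbs, frobNormSq_conjTranspose] at this
  linarith

end Modulus

section Completion

variable {m : Type*} [Fintype m]

lemma frobNorm_fromBlocks_le_iff (A B X : Matrix m m ℂ) :
    frobNorm (fromBlocks A X Xᴴ B) ≤ frobNorm (A + B) ↔ frobNormSq X ≤ (Aᴴ * B).trace.re := by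
  change √(frobNormSq _) ≤ √(frobNormSq _) ↔ _
  rw [Real.sqrt_le_sqrt_iff (frobNormSq_nonneg _), frobNormSq_fromBlocks, frobNormSq_add,
    frobNormSq_conjTranspose]
  constructor <;> intro h <;> linarith

theorem frobNormSq_le_re_trace_of_posSemidef_fromBlocks [DecidableEq m] {A B X : Matrix m m ℂ}
    (hX : IsStarNormal X) (h : (fromBlocks A X Xᴴ B).PosSemidef) :
    frobNormSq X ≤ (Aᴴ * B).trace.re := by
  obtain ⟨R, hR⟩ := CStarAlgebra.nonneg_iff_eq_star_mul_self.mp h.nonneg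
  rw [← fromCols_toCols R, star_eq_conjTranspose, conjTranspose_fromCols_eq_fromRows_conjTranspose,
    fromRows_mul_fromCols, fromBlocks_inj] at hR
  obtain ⟨rfl, rfl, -, rfl⟩ := hR
  set R₁ := R.toCols₁
  set R₂ := R.toCols₂
  calc frobNormSq (R₁ᴴ * R₂)
      = eigenNormSq (R₁ᴴ * R₂) := ((eigenNormSq_le_frobNormSq_and_eq_of_isStarNormal _).2 hX).symm
    _ = eigenNormSq (R₂ * R₁ᴴ) := eigenNormSq_mul_comm _ _
    _ ≤ frobNormSq (R₂ * R₁ᴴ) := (eigenNormSq_le_frobNormSq_and_eq_of_isStarNormal _).1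
    _ = ((R₁ᴴ * R₁)ᴴ * (R₂ᴴ * R₂)).trace.re := by
      simp only [frobNormSq, conjTranspose_mul, conjTranspose_conjTranspose, Matrix.mul_assoc]
      rw [trace_mul_comm R₁]
      simp only [Matrix.mul_assoc]
      rw [← Matrix.mul_assoc R₂ᴴ, trace_mul_comm, Matrix.mul_assoc]

end Completion

/-- If `X` is nonnormal then `‖[[|Xᴴ|,X],[Xᴴ,|X|]]‖₂ > ‖|Xᴴ| + |X|‖₂`;
consequently, `‖[[A,X],[Xᴴ,B]]‖₂ ≤ ‖A+B‖₂` holds for all positive semidefinite completions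
if and only if `X` is normal. -/
theorem stmt12 {n : ℕ} (X : Matrix (Fin n) (Fin n) ℂ) :
    (¬ X * Xᴴ = Xᴴ * X →
      frobNorm (matAbs Xᴴ + matAbs X) <
        frobNorm (Matrix.fromBlocks (matAbs Xᴴ) X Xᴴ (matAbs X))) ∧
    ((∀ A B : Matrix (Fin n) (Fin n) ℂ, (Matrix.fromBlocks A X Xᴴ B).PosSemidef →
        frobNorm (Matrix.fromBlocks A X Xᴴ B) ≤ frobNorm (A + B)) ↔
      X * Xᴴ = Xᴴ * X) := by
  have hnormal : X * Xᴴ = Xᴴ * X ↔ IsStarNormal X := by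
    rw [isStarNormal_iff_conjTranspose, eq_comm]
  simp only [matAbs_eq_cfcAbs]
  have hgap : ¬ X * Xᴴ = Xᴴ * X → frobNorm (CFC.abs Xᴴ + CFC.abs X) <
      frobNorm (fromBlocks (CFC.abs Xᴴ) X Xᴴ (CFC.abs X)) := fun hX => by
    rw [← not_le, frobNorm_fromBlocks_le_iff, not_le]
    exact re_trace_cfcAbs_mul_cfcAbs_lt (hnormal.not.mp hX)
  refine ⟨hgap, fun h => ?_, fun hX A B hAB => ?_⟩
  · by_contra hX
    exact (hgap hX).not_ge (h _ _ (posSemidef_fromBlocks_cfcAbs X))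
  · rw [frobNorm_fromBlocks_le_iff]
    exact frobNormSq_le_re_trace_of_posSemidef_fromBlocks (hnormal.mp hX) hAB
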